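/- arXiv:math/0407035 — 3 statements merged into one kernel-verified Lean document; each statement's English description precedes it below -/
import Mathlib

section
/- Suppose ρ : ℤ≥0 × ℤ≥0 → ℚ satisfies ρ(p,q) = -ρ(q,p) for all p,q, and ρ(p,q+r+2)+ρ(q,r+p+2)+ρ(r,p+q+2) = ρ(p,q+r+1)+ρ(q,r+p+1)+ρ(r,p+q+1) for all p,q,r. Then there exist rationals λ and b₁ such that ρ(p,q) = λ(q-p)/((p+q+2)(p+q+3)(p+q+4)) for all p,q > 0, and ρ(0,q) = λq/((q+2)(q+3)(q+4)) + b₁ for all q > 0. -/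
/-- Proposition 3.8: if `ρ : ℤ≥0 × ℤ≥0 → ℚ` is skew-symmetric and satisfies the
cyclic relation, then there are rationals `λ` and `b₁` with
`ρ(p,q) = λ(q-p)/((p+q+2)(p+q+3)(p+q+4))` for all `p,q > 0` and
`ρ(0,q) = λq/((q+2)(q+3)(q+4)) + b₁` for all `q > 0`. -/
theorem rho_determined (ρ : ℕ → ℕ → ℚ)
    (hskew : ∀ p q : ℕ, ρ p q = - ρ q p)
    (hcyc : ∀ p q r : ℕ,
      ρ p (q + r + 2) + ρ q (r + p + 2) + ρ r (p + q + 2) =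
        ρ p (q + r + 1) + ρ q (r + p + 1) + ρ r (p + q + 1)) :
    ∃ lam b₁ : ℚ,
      (∀ p q : ℕ, 0 < p → 0 < q → ρ p q =
        lam * ((q : ℚ) - (p : ℚ)) /
          (((p : ℚ) + (q : ℚ) + 2) * ((p : ℚ) + (q : ℚ) + 3) *
            ((p : ℚ) + (q : ℚ) + 4))) ∧
      (∀ q : ℕ, 0 < q → ρ 0 q =
        lam * (q : ℚ) / (((q : ℚ) + 2) * ((q : ℚ) + 3) * ((q : ℚ) + 4)) + b₁) := by
  -- the cyclic relation, with all second arguments supplied explicitly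
  have hE2 : ∀ p q r A A' B B' C C' : ℕ, A = q + r + 2 → A' = q + r + 1 →
      B = r + p + 2 → B' = r + p + 1 → C = p + q + 2 → C' = p + q + 1 →
      (ρ p A - ρ p A') + (ρ q B - ρ q B') + (ρ r C - ρ r C') = 0 := by
    intro p q r A A' B B' C C' hA hA' hB hB' hC hC'
    subst hA hA' hB hB' hC hC'
    linarith [hcyc p q r]
  have key : ∀ m : ℕ,
      (∀ p q : ℕ, 0 < p → 0 < q → p + q = m →
        ρ p q * (((m:ℚ)+2)*((m:ℚ)+3)*((m:ℚ)+4)) = (210 * ρ 1 2) * ((q:ℚ) - (p:ℚ))) ∧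
      (0 < m → ρ 0 m * (((m:ℚ)+2)*((m:ℚ)+3)*((m:ℚ)+4)) =
        (210 * ρ 1 2) * (m:ℚ) + (ρ 0 1 - 7/2 * ρ 1 2) * (((m:ℚ)+2)*((m:ℚ)+3)*((m:ℚ)+4))) := by
    intro m
    induction m using Nat.strong_induction_on with
    | _ m ih =>
    rcases Nat.lt_or_ge m 5 with hm | hm
    · -- base cases m = 0,1,2,3,4
      have h000 := hcyc 0 0 0
      have h100 := hcyc 1 0 0
      have h200 := hcyc 2 0 0
      have h110 := hcyc 1 1 0
      norm_num at h000 h100 h200 h110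
      have h11 := hskew 1 1
      have h21 := hskew 2 1
      have h22 := hskew 2 2
      have h31 := hskew 3 1
      interval_cases m
      · exact ⟨fun p q hp hq hpq => by omega, fun h => absurd h (lt_irrefl 0)⟩
      · constructor
        · intro p q hp hq hpq; exfalso; omega
        · intro _; push_cast; ring
      · constructor
        · intro p q hp hq hpq
          have : p = 1 ∧ q = 1 := by omega
          obtain ⟨rfl, rfl⟩ := this
          push_cast
          linarith [h11]
        · intro _; push_cast; norm_num; linarith [h000]
      · constructor
        · intro p q hp hq hpq
          have : p = 1 ∧ q = 2 ∨ p = 2 ∧ q = 1 := by omega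
          rcases this with ⟨rfl, rfl⟩ | ⟨rfl, rfl⟩
          · push_cast; ring
          · push_cast; linarith [h21]
        · intro _; push_cast; norm_num; linarith [h000, h100, h11]
      · constructor
        · intro p q hp hq hpq
          have : p = 1 ∧ q = 3 ∨ p = 2 ∧ q = 2 ∨ p = 3 ∧ q = 1 := by omega
          rcases this with ⟨rfl, rfl⟩ | ⟨rfl, rfl⟩ | ⟨rfl, rfl⟩
          · push_cast; norm_num; linarith [h110, h200, h22, h21, h000, h100, h11]
          · push_cast; norm_num; linarith [h22]
          · push_cast; norm_num; linarith [h31, h110, h200, h22, h21, h000, h100, h11]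
        · intro _; push_cast; norm_num; linarith [h200, h22, h21, h000, h100, h11]
    · -- inductive step : m = n + 5
      obtain ⟨n, rfl⟩ : ∃ n, m = n + 5 := ⟨m - 5, by omega⟩
      have ihm1 := ih (n + 4) (by omega)
      -- values at the previous level, multiplied out
      have v1 : ρ 1 (n+3) * (((n:ℚ)+6)*((n:ℚ)+7)*((n:ℚ)+8)) = (210 * ρ 1 2) * ((n:ℚ)+2) := by
        have h := ihm1.1 1 (n+3) (by omega) (by omega) (by omega)
        push_cast at h
        linear_combination h
      have v2 : ρ 2 (n+2) * (((n:ℚ)+6)*((n:ℚ)+7)*((n:ℚ)+8)) = (210 * ρ 1 2) * (n:ℚ) := by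
        have h := ihm1.1 2 (n+2) (by omega) (by omega) (by omega)
        push_cast at h
        linear_combination h
      have v0 : ρ 0 (n+4) * (((n:ℚ)+6)*((n:ℚ)+7)*((n:ℚ)+8)) =
          (210 * ρ 1 2) * ((n:ℚ)+4)
            + (ρ 0 1 - 7/2 * ρ 1 2) * (((n:ℚ)+6)*((n:ℚ)+7)*((n:ℚ)+8)) := by
        have h := ihm1.2 (by omega)
        push_cast at h
        linear_combination h
      -- the difference function is affine along the level
      have hdiff : ∀ p j : ℕ, p + 1 + j = n + 3 →
          ρ (p+1) (j+2) - ρ (p+1) (j+1) =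
            (ρ p (j+3) - ρ p (j+2)) +
              (ρ 1 (n+4) - ρ 1 (n+3) - (ρ 0 (n+5) - ρ 0 (n+4))) := by
        intro p j h
        have h1 := hE2 p 1 j (j+3) (j+2) (n+4) (n+3) (p+3) (p+2)
          (by omega) (by omega) (by omega) (by omega) (by omega) (by omega)
        have h2 := hE2 (p+1) 0 j (j+2) (j+1) (n+5) (n+4) (p+3) (p+2)
          (by omega) (by omega) (by omega) (by omega) (by omega) (by omega)
        linarith [h1, h2]
      have hlin : ∀ p j : ℕ, p + j = n + 3 →
          ρ p (j+2) - ρ p (j+1) =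
            (ρ 0 (n+5) - ρ 0 (n+4)) +
              (p:ℚ) * (ρ 1 (n+4) - ρ 1 (n+3) - (ρ 0 (n+5) - ρ 0 (n+4))) := by
        intro p
        induction p with
        | zero =>
          intro j hj
          have hj' : j = n + 3 := by omega
          subst hj'
          simp only [show n+3+2 = n+5 from by omega, show n+3+1 = n+4 from by omega]
          push_cast
          ring
        | succ p ihp =>
          intro j hj
          have h1 := hdiff p j (by omega)
          have h2 := ihp (j+1) (by omega)
          simp only [show j+1+2 = j+3 from by omega, show j+1+1 = j+2 from by omega] at h2
          push_cast
          linear_combination h1 + h2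
      -- the two pinning equations
      have eq1raw := hE2 0 1 (n+2) (n+5) (n+4) (n+4) (n+3) 3 2
        (by omega) (by omega) (by omega) (by omega) (by omega) (by omega)
      have lC := hlin (n+2) 1 (by omega)
      simp only [show (1:ℕ)+2 = 3 from rfl, show (1:ℕ)+1 = 2 from rfl] at lC
      push_cast at lC
      have e1 : 3 * (ρ 0 (n+5) - ρ 0 (n+4)) +
          ((n:ℚ)+3) * (ρ 1 (n+4) - ρ 1 (n+3) - (ρ 0 (n+5) - ρ 0 (n+4))) = 0 := by
        linear_combination eq1raw - lC
      have l1 := hlin 2 (n+1) (by omega)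
      simp only [show n+1+2 = n+3 from by omega, show n+1+1 = n+2 from by omega] at l1
      have l2 := hlin (n+3) 0 (by omega)
      simp only [show (0:ℕ)+2 = 2 from rfl, show (0:ℕ)+1 = 1 from rfl] at l2
      push_cast at l2
      have hsk := hskew 2 (n+3)
      have sk2 := hskew (n+3) 1
      have e2 : 2 * (ρ 0 (n+5) - ρ 0 (n+4)) +
          ((n:ℚ)+5) * (ρ 1 (n+4) - ρ 1 (n+3) - (ρ 0 (n+5) - ρ 0 (n+4))) =
          ρ 1 (n+3) - ρ 2 (n+2) := by
        linear_combination -l1 - l2 + hsk - sk2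
      have hR' : (ρ 1 (n+3) - ρ 2 (n+2)) * (((n:ℚ)+6)*((n:ℚ)+7)*((n:ℚ)+8)) =
          2 * (210 * ρ 1 2) := by
        linear_combination v1 - v2
      have hDv' : ((n:ℚ)+9) * (ρ 1 (n+4) - ρ 1 (n+3) - (ρ 0 (n+5) - ρ 0 (n+4))) *
          (((n:ℚ)+6)*((n:ℚ)+7)*((n:ℚ)+8)) = 6 * (210 * ρ 1 2) := by
        linear_combination (3*(((n:ℚ)+6)*((n:ℚ)+7)*((n:ℚ)+8))) * e2
          - (2*(((n:ℚ)+6)*((n:ℚ)+7)*((n:ℚ)+8))) * e1 + 3 * hR'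
      have hXv' : 3 * (ρ 0 (n+5) - ρ 0 (n+4)) *
          (((n:ℚ)+9) * (((n:ℚ)+6)*((n:ℚ)+7)*((n:ℚ)+8))) =
          -(6 * ((n:ℚ)+3) * (210 * ρ 1 2)) := by
        linear_combination (((n:ℚ)+9) * (((n:ℚ)+6)*((n:ℚ)+7)*((n:ℚ)+8))) * e1
          - ((n:ℚ)+3) * hDv'
      have hKne : (3*((n:ℚ)+9)*(((n:ℚ)+6)*((n:ℚ)+7)*((n:ℚ)+8))) ≠ 0 := by positivity
      constructor
      · intro p q hp hq hpq
        rcases Nat.lt_or_ge q 2 with hq2 | hq2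
        · -- q = 1, p = n + 4
          have hq1 : q = 1 := by omega
          have hp4 : p = n + 4 := by omega
          subst hq1 hp4
          have hskA := hskew (n+4) 1
          have lB := hlin 1 (n+2) (by omega)
          simp only [show n+2+2 = n+4 from by omega, show n+2+1 = n+3 from by omega] at lB
          push_cast at lB
          have hmain : ρ (n+4) 1 * (((n:ℚ)+7)*((n:ℚ)+8)*((n:ℚ)+9)) *
              (3*((n:ℚ)+9)*(((n:ℚ)+6)*((n:ℚ)+7)*((n:ℚ)+8))) =
              ((210 * ρ 1 2) * (1 - ((n:ℚ)+4))) *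
              (3*((n:ℚ)+9)*(((n:ℚ)+6)*((n:ℚ)+7)*((n:ℚ)+8))) := by
            linear_combination
              (3*((n:ℚ)+9)*(((n:ℚ)+6)*((n:ℚ)+7)*((n:ℚ)+8))*(((n:ℚ)+7)*((n:ℚ)+8)*((n:ℚ)+9))) * hskA
              - (3*((n:ℚ)+9)*(((n:ℚ)+6)*((n:ℚ)+7)*((n:ℚ)+8))*(((n:ℚ)+7)*((n:ℚ)+8)*((n:ℚ)+9))) * lB
              - (3*((n:ℚ)+9)*(((n:ℚ)+7)*((n:ℚ)+8)*((n:ℚ)+9))) * v1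
              - (((n:ℚ)+7)*((n:ℚ)+8)*((n:ℚ)+9)) * hXv'
              - (3*(((n:ℚ)+7)*((n:ℚ)+8)*((n:ℚ)+9))) * hDv'
          have hfin := mul_right_cancel₀ hKne hmain
          push_cast
          linear_combination hfin
        · -- q = j + 2
          obtain ⟨j, rfl⟩ : ∃ j, q = j + 2 := ⟨q - 2, by omega⟩
          have hpj : p + j = n + 3 := by omega
          have lp := hlin p j hpj
          have vprev : ρ p (j+1) * ((((n:ℚ))+6)*(((n:ℚ))+7)*(((n:ℚ))+8)) =
              (210 * ρ 1 2) * (((j:ℚ)+1) - (p:ℚ)) := by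
            have h := ihm1.1 p (j+1) hp (by omega) (by omega)
            push_cast at h
            linear_combination h
          have hjc : (j:ℚ) = (n:ℚ) + 3 - (p:ℚ) := by
            have hc : (p:ℚ) + (j:ℚ) = (n:ℚ) + 3 := by exact_mod_cast hpj
            linarith
          rw [hjc] at vprev
          have hmain : ρ p (j+2) * (((n:ℚ)+7)*((n:ℚ)+8)*((n:ℚ)+9)) *
              (3*((n:ℚ)+9)*(((n:ℚ)+6)*((n:ℚ)+7)*((n:ℚ)+8))) =
              ((210 * ρ 1 2) * (((n:ℚ)+5) - 2*(p:ℚ))) *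
              (3*((n:ℚ)+9)*(((n:ℚ)+6)*((n:ℚ)+7)*((n:ℚ)+8))) := by
            linear_combination
              (3*((n:ℚ)+9)*(((n:ℚ)+6)*((n:ℚ)+7)*((n:ℚ)+8))*(((n:ℚ)+7)*((n:ℚ)+8)*((n:ℚ)+9))) * lp
              + (3*((n:ℚ)+9)*(((n:ℚ)+7)*((n:ℚ)+8)*((n:ℚ)+9))) * vprev
              + (((n:ℚ)+7)*((n:ℚ)+8)*((n:ℚ)+9)) * hXv'
              + (3*(p:ℚ)*(((n:ℚ)+7)*((n:ℚ)+8)*((n:ℚ)+9))) * hDv'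
          have hfin := mul_right_cancel₀ hKne hmain
          push_cast
          rw [hjc]
          linear_combination hfin
      · intro _
        have hmain : ρ 0 (n+5) * (((n:ℚ)+7)*((n:ℚ)+8)*((n:ℚ)+9)) *
            (3*((n:ℚ)+9)*(((n:ℚ)+6)*((n:ℚ)+7)*((n:ℚ)+8))) =
            ((210 * ρ 1 2) * ((n:ℚ)+5)
              + (ρ 0 1 - 7/2 * ρ 1 2) * (((n:ℚ)+7)*((n:ℚ)+8)*((n:ℚ)+9))) *
            (3*((n:ℚ)+9)*(((n:ℚ)+6)*((n:ℚ)+7)*((n:ℚ)+8))) := by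
          linear_combination (((n:ℚ)+7)*((n:ℚ)+8)*((n:ℚ)+9)) * hXv'
            + (3*((n:ℚ)+9)*(((n:ℚ)+7)*((n:ℚ)+8)*((n:ℚ)+9))) * v0
        have hfin := mul_right_cancel₀ hKne hmain
        push_cast
        linear_combination hfin
  refine ⟨210 * ρ 1 2, ρ 0 1 - 7/2 * ρ 1 2, ?_, ?_⟩
  · intro p q hp hq
    have h := (key (p+q)).1 p q hp hq rfl
    push_cast at h
    have hne : (((p:ℚ) + (q:ℚ) + 2) * ((p:ℚ) + (q:ℚ) + 3) * ((p:ℚ) + (q:ℚ) + 4)) ≠ 0 := by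
      positivity
    rw [eq_div_iff hne]
    linear_combination h
  · intro q hq
    have h := (key q).2 hq
    have hne : (((q:ℚ) + 2) * ((q:ℚ) + 3) * ((q:ℚ) + 4)) ≠ 0 := by positivity
    field_simp
    linear_combination 2*h
end

section
/- In the setting of the previous statement, suppose additionally that C^{1,n-1} carries the property that dg = s(δg) for all g ∈ C^{0,n-1} (e.g., because C^{1,n-2} = 0). Then s restricts to an isomorphism from the δ-coboundaries B^{0,n}_δ ⊂ C^{0,n} onto the d-coboundaries B^{1,n-1}_d ⊂ C^{1,n-1}. -/
/-- Proposition 3.3 abstractly: in the setting of the homotopy `d = δs + sδ`,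
if moreover `dg = s(δg)` for every `g ∈ C^{0,n-1}` (e.g. because
`C^{1,n-2} = 0`), then `s` restricts to a bijection from the δ-coboundaries
`B^{0,n}_δ = im δ₀` onto the d-coboundaries `B^{1,n-1}_d = im d₀`. -/
theorem s_bijOn_coboundaries
    (C0nm1 C0n C0n1 C1nm1 C1n : Type)
    [AddCommGroup C0nm1] [AddCommGroup C0n] [AddCommGroup C0n1]
    [AddCommGroup C1nm1] [AddCommGroup C1n]
    (d : C0n →+ C1n)            -- d : C^{0,n} → C^{1,n}
    (d₀ : C0nm1 →+ C1nm1)       -- d : C^{0,n-1} → C^{1,n-1}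
    (δ : C0n →+ C0n1)           -- δ : C^{0,n} → C^{0,n+1}
    (δ₀ : C0nm1 →+ C0n)         -- δ : C^{0,n-1} → C^{0,n}
    (s : C0n →+ C1nm1)          -- s : C^{0,n} → C^{1,n-1}
    (δ' : C1nm1 →+ C1n)         -- δ : C^{1,n-1} → C^{1,n}
    (s' : C0n1 →+ C1n)          -- s : C^{0,n+1} → C^{1,n}
    (hhom : ∀ f : C0n, d f = δ' (s f) + s' (δ f))
    (hδδ : ∀ g : C0nm1, δ (δ₀ g) = 0)
    (hd0 : ∀ g : C0nm1, d₀ g = s (δ₀ g))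
    (hdinj : Function.Injective d) :
    Set.BijOn s (Set.range δ₀) (Set.range d₀) := by
  refine ⟨?_, ?_, ?_⟩
  · rintro _ ⟨g, rfl⟩
    exact ⟨g, hd0 g⟩
  · rintro _ ⟨g₁, rfl⟩ _ ⟨g₂, rfl⟩ h
    apply hdinj
    rw [hhom, hhom, hδδ, hδδ, h]
  · rintro _ ⟨g, rfl⟩
    exact ⟨δ₀ g, ⟨g, rfl⟩,  (hd0 g).symm⟩
end

section
/- Consequently, s induces a well-defined injective map s* : H^{0,4}_δ → H^{1,3}_d on cohomology, and the image of s* lies in the kernel Ã³ of the map δ* : H^{1,3}_d → H^{1,4}_d induced by δ. -/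
/-!
On a δ-cocycle `f` the homotopy gives `δ(s f) = d f`, so `s f` is δ-closed up to a `d`-boundary:
this is why `δ* ∘ s* = 0`. The hypothesis `d = s ∘ δ` in degree 3 makes `s` carry δ-boundaries
onto `d`-boundaries, so `s*` is well defined; conversely if `s f = d g` then
`d f = δ(d g) = d(δ g)`, and injectivity of `d` gives `f = δ g`, so `s*` is injective.
-/

namespace QuotientAddGroup

variable {G H : Type*} [AddCommGroup G] [AddCommGroup H]

theorem map_injective_of_comap_le {N : AddSubgroup G} {M : AddSubgroup H} (f : G →+ H)
    (h : N ≤ M.comap f) (hcomap : M.comap f ≤ N) : Function.Injective (map N M f h) := by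
  rw [injective_iff_map_eq_zero]
  intro x hx
  induction x using QuotientAddGroup.induction_on with
  | H g =>
    rw [map_mk, eq_zero_iff] at hx
    exact (eq_zero_iff g).2 (hcomap hx)

end QuotientAddGroup

section Homotopy

variable {A B C D E F : Type*} [AddCommGroup A] [AddCommGroup B] [AddCommGroup C]
  [AddCommGroup D] [AddCommGroup E] [AddCommGroup F]

theorem AddMonoidHom.range_le_comap_range_of_comm {δ : A →+ B} {d : A →+ C} {d' : B →+ D}
    {δ' : C →+ D} (hcomm : ∀ a, δ' (d a) = d' (δ a)) : d.range ≤ d'.range.comap δ' := by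
  rintro _ ⟨a, rfl⟩
  exact ⟨δ a, (hcomm a).symm⟩

theorem apply_homotopy_eq_of_mem_ker {δ : B →+ E} {d : B →+ D} {δ' : C →+ D} {s : B →+ C}
    {s' : E →+ D} (hhom : ∀ f, d f = δ' (s f) + s' (δ f)) {f : B} (hf : f ∈ δ.ker) :
    δ' (s f) = d f := by
  rw [hhom f, AddMonoidHom.mem_ker.1 hf, map_zero, add_zero]

theorem range_addSubgroupOf_le_comap_range {δ : A →+ B} {d : A →+ C} {s : B →+ C}
    (hsδ : ∀ a, d a = s (δ a)) (K : AddSubgroup B) :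
    δ.range.addSubgroupOf K ≤ d.range.comap (s.comp K.subtype) := by
  rintro f ⟨a, ha⟩
  exact ⟨a, by rw [hsδ, ha]; rfl⟩

theorem comap_range_le_range_addSubgroupOf {δ : A →+ B} {δ₂ : B →+ E} {d : A →+ C}
    {d₂ : B →+ D} {δ' : C →+ D} {s : B →+ C} {s' : E →+ D}
    (hhom : ∀ f, d₂ f = δ' (s f) + s' (δ₂ f)) (hcomm : ∀ a, δ' (d a) = d₂ (δ a))
    (hd₂ : Function.Injective d₂) :
    d.range.comap (s.comp δ₂.ker.subtype) ≤ δ.range.addSubgroupOf δ₂.ker := by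
  rintro ⟨f, hf⟩ ⟨a, ha⟩
  refine ⟨a, hd₂ ?_⟩
  calc d₂ (δ a) = δ' (d a) := (hcomm a).symm
    _ = δ' (s f) := congrArg δ' ha
    _ = d₂ f := apply_homotopy_eq_of_mem_ker hhom hf

end Homotopy

theorem sStar_injective_into_kernel_general
    (C03 C04 C05 C13 C14 : Type)
    [AddCommGroup C03] [AddCommGroup C04] [AddCommGroup C05]
    [AddCommGroup C13] [AddCommGroup C14]
    (δ3 : C03 →+ C04) (δ4 : C04 →+ C05)
    (d3 : C03 →+ C13) (d4 : C04 →+ C14)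
    (δ' : C13 →+ C14) (s : C04 →+ C13) (s' : C05 →+ C14)
    (hhom : ∀ f : C04, d4 f = δ' (s f) + s' (δ4 f))
    (hcomm : ∀ g : C03, δ' (d3 g) = d4 (δ3 g))
    (hd4inj : Function.Injective d4)
    (hC12 : ∀ g : C03, d3 g = s (δ3 g)) :
    ∃ (S : (δ4.ker ⧸ (δ3.range.addSubgroupOf δ4.ker)) →+ (C13 ⧸ d3.range))
      (T : (C13 ⧸ d3.range) →+ (C14 ⧸ d4.range)),
      (∀ x : C13, T (QuotientAddGroup.mk x) = QuotientAddGroup.mk (δ' x)) ∧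
      (∀ f : δ4.ker, S (QuotientAddGroup.mk f) = QuotientAddGroup.mk (s f.1)) ∧
      Function.Injective S ∧
      (∀ y, T (S y) = 0) := by
  have hS := range_addSubgroupOf_le_comap_range hC12 δ4.ker
  have hT := AddMonoidHom.range_le_comap_range_of_comm hcomm
  refine ⟨QuotientAddGroup.map _ _ _ hS, QuotientAddGroup.map _ _ _ hT, fun _ => rfl, fun _ => rfl,
    QuotientAddGroup.map_injective_of_comap_le _ hS
      (comap_range_le_range_addSubgroupOf hhom hcomm hd4inj), ?_⟩
  intro y
  induction y using QuotientAddGroup.induction_on with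
  | H f =>
    exact (QuotientAddGroup.eq_zero_iff _).2 ⟨f, (apply_homotopy_eq_of_mem_ker hhom f.2).symm⟩

/-- `s` induces a well-defined injective map `s* : H^{0,4}_δ → H^{1,3}_d`,
whose image lies in the kernel `Ã³` of the map `δ* : H^{1,3}_d → H^{1,4}_d`
induced by `δ`.  Here `H^{0,4}_δ = ker δ₄ / im δ₃`, `H^{1,3}_d = C^{1,3}/im d₃`,
`H^{1,4}_d = C^{1,4}/im d₄`; the hypotheses are the homotopy `d = δs + sδ`,
commutation `δd = dδ`, `δδ = 0`, injectivity of `d₄`, and the consequence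
`d₃ = s ∘ δ₃` of `C^{1,2} = 0` (so that `s(B^{0,4}_δ) = B^{1,3}_d`). -/
theorem sStar_injective_into_kernel
    (C03 C04 C05 C13 C14 : Type)
    [AddCommGroup C03] [AddCommGroup C04] [AddCommGroup C05]
    [AddCommGroup C13] [AddCommGroup C14]
    (δ3 : C03 →+ C04) (δ4 : C04 →+ C05)
    (d3 : C03 →+ C13) (d4 : C04 →+ C14)
    (δ' : C13 →+ C14) (s : C04 →+ C13) (s' : C05 →+ C14)
    (hhom : ∀ f : C04, d4 f = δ' (s f) + s' (δ4 f))
    (hcomm : ∀ g : C03, δ' (d3 g) = d4 (δ3 g))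
    (hδδ : ∀ g : C03, δ4 (δ3 g) = 0)
    (hd4inj : Function.Injective d4)
    (hC12 : ∀ g : C03, d3 g = s (δ3 g)) :
    ∃ (S : (δ4.ker ⧸ (δ3.range.addSubgroupOf δ4.ker)) →+ (C13 ⧸ d3.range))
      (T : (C13 ⧸ d3.range) →+ (C14 ⧸ d4.range)),
      (∀ x : C13, T (QuotientAddGroup.mk x) = QuotientAddGroup.mk (δ' x)) ∧
      (∀ f : δ4.ker, S (QuotientAddGroup.mk f) = QuotientAddGroup.mk (s f.1)) ∧
      Function.Injective S ∧
      (∀ y, T (S y) = 0) :=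
  sStar_injective_into_kernel_general C03 C04 C05 C13 C14 δ3 δ4 d3 d4 δ' s s' hhom hcomm hd4inj hC12
end
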